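/- The set 𝔅_ℍ of badly approximable quaternions—those β for which there exists c(β) > 0 with |β − p·q⁻¹|₂ ≥ c(β)/|q|₂² for all Hurwitz integer pairs (p,q), q ≠ 0—has 4-dimensional Lebesgue measure zero. -/

import Mathlib

open MeasureTheory Metric Filter Set Quaternion

noncomputable instance : MeasurableSpace (Quaternion ℝ) := borel _
instance : BorelSpace (Quaternion ℝ) := ⟨rfl⟩

/-- Lebesgue measure on the quaternions, transported from `ℝ⁴`. -/
noncomputable instance : MeasureSpace (Quaternion ℝ) :=
  ⟨Measure.map (Quaternion.equivTuple ℝ).symm volume⟩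

/-- A quaternion is a Hurwitz integer if all its coordinates are integers or
all its coordinates are in `ℤ + 1/2`. -/
def IsHurwitz (x : Quaternion ℝ) : Prop :=
  (∃ a b c d : ℤ, x.re = a ∧ x.imI = b ∧ x.imJ = c ∧ x.imK = d) ∨
  (∃ a b c d : ℤ, x.re = a + 1/2 ∧ x.imI = b + 1/2 ∧ x.imJ = c + 1/2 ∧ x.imK = d + 1/2)

/-- The fundamental domain `Δ = [0,1)³ × [0,1/2)` for Hurwitz translations. -/
def fundDom : Set (Quaternion ℝ) :=
  {x | 0 ≤ x.re ∧ x.re < 1 ∧ 0 ≤ x.imI ∧ x.imI < 1 ∧ 0 ≤ x.imJ ∧ x.imJ < 1 ∧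
    0 ≤ x.imK ∧ x.imK < 1/2}

/-- The closed fundamental domain `Δ̄ = [0,1]³ × [0,1/2]`. -/
def fundDomCl : Set (Quaternion ℝ) :=
  {x | 0 ≤ x.re ∧ x.re ≤ 1 ∧ 0 ≤ x.imI ∧ x.imI ≤ 1 ∧ 0 ≤ x.imJ ∧ x.imJ ≤ 1 ∧
    0 ≤ x.imK ∧ x.imK ≤ 1/2}

/-- The set of badly approximable quaternions. -/
def BadH : Set (Quaternion ℝ) :=
  {β | ∃ c : ℝ, 0 < c ∧ ∀ p q : Quaternion ℝ, IsHurwitz p → IsHurwitz q → q ≠ 0 →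
    c / ‖q‖ ^ 2 ≤ ‖β - p * q⁻¹‖}

/-! Let `hurwitzApprox c` be the open set of `β` with `‖β - p q⁻¹‖ < c / ‖q‖²` for some Hurwitz
`p` and `q ≠ 0`; every badly approximable quaternion avoids `hurwitzApprox (1 / (n + 1))` for some
`n`. The complement of `hurwitzApprox c` is porous: at a point `β` of it, the pigeonhole principle
gives Hurwitz `p`, `q` with `‖β - p q⁻¹‖ ≤ 4 / ‖q‖²`, where `‖q‖` is as large as we like because
`β` has no approximation of quality `c / ‖q‖²`; the ball of radius `c / (2‖q‖²)` about `p q⁻¹`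
then lies in `hurwitzApprox c` and in the ball of radius `(c + 8) / (2‖q‖²)` about `β`. By
Lebesgue's density theorem a porous set is null. -/

open scoped ENNReal Topology

-- At a density point of `s` the relative measure of `sᶜ` in small balls tends to `0`, while
-- porosity keeps it above `κ ^ d` along a sequence of radii.
theorem measure_eq_zero_of_frequently_closedBall_subset_compl {E : Type*}
    [NormedAddCommGroup E] [NormedSpace ℝ E] [FiniteDimensional ℝ E] [MeasurableSpace E]
    [BorelSpace E] (μ : Measure E) [μ.IsAddHaarMeasure] {s : Set E} (hs : MeasurableSet s)
    {κ : ℝ} (hκ : 0 < κ)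
    (h : ∀ x ∈ s, ∃ᶠ r in 𝓝[>] 0, ∃ y, closedBall y (κ * r) ⊆ sᶜ ∩ closedBall x r) :
    μ s = 0 := by
  set γ : ℝ≥0∞ := ENNReal.ofReal (κ ^ Module.finrank ℝ E)
  have hγ : 0 < γ := ENNReal.ofReal_pos.2 (pow_pos hκ _)
  rw [measure_eq_zero_iff_ae_notMem]
  filter_upwards [Besicovitch.ae_tendsto_measure_inter_div_of_measurableSet μ hs.compl]
    with x hx hxs
  rw [indicator_of_notMem (not_not_intro hxs)] at hx
  obtain ⟨r, ⟨y, hy⟩, hlt, hr : 0 < r⟩ :=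
    ((h x hxs).and_eventually ((hx.eventually (gt_mem_nhds hγ)).and self_mem_nhdsWithin)).exists
  have hmass : γ * μ (closedBall x r) ≤ μ (sᶜ ∩ closedBall x r) :=
    calc γ * μ (closedBall x r) = μ (closedBall y (κ * r)) := by
          rw [Measure.addHaar_closedBall_mul μ y hκ.le hr.le, Measure.addHaar_closedBall_center]
      _ ≤ μ (sᶜ ∩ closedBall x r) := measure_mono hy
  rw [← ENNReal.le_div_iff_mul_le (Or.inl (measure_closedBall_pos μ x hr).ne')
    (Or.inl measure_closedBall_lt_top.ne)] at hmass
  exact hlt.not_ge hmass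

-- Dirichlet's pigeonhole: the `(N + 1) ^ |ι|` points of `[0, N] ^ ι` are sorted into `N ^ |κ|`
-- boxes of side `1 / N` according to the fractional parts of their images.
theorem exists_ne_zero_abs_le_abs_sub_lt {ι κ : Type*} [Fintype ι] [Nonempty ι] [Fintype κ]
    (hcard : Fintype.card κ ≤ Fintype.card ι) (f : (ι → ℤ) →+ (κ → ℝ)) {N : ℕ} (hN : 0 < N) :
    ∃ q : ι → ℤ, q ≠ 0 ∧ (∀ i, |q i| ≤ N) ∧ ∃ p : κ → ℤ, ∀ k, |f q k - p k| < 1 / N := by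
  classical
  have hN' : (0 : ℝ) < N := Nat.cast_pos.2 hN
  set s := Fintype.piFinset fun _ : ι => Finset.Icc (0 : ℤ) N
  set t := Fintype.piFinset fun _ : κ => Finset.Ico (0 : ℤ) N
  have hts : t.card < s.card := by
    simp only [s, t, Fintype.card_piFinset, Int.card_Icc, Int.card_Ico, Finset.prod_const,
      Finset.card_univ, sub_zero, Int.toNat_natCast]
    rw [show ((N : ℤ) + 1).toNat = N + 1 by omega]
    calc N ^ Fintype.card κ ≤ N ^ Fintype.card ι := Nat.pow_le_pow_right hN hcard
      _ < (N + 1) ^ Fintype.card ι := Nat.pow_lt_pow_left N.lt_succ_self Fintype.card_ne_zero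
  have hbox : ∀ v ∈ s, (fun k => ⌊Int.fract (f v k) * N⌋) ∈ t := by
    intro v _
    simp only [t, Fintype.mem_piFinset, Finset.mem_Ico]
    intro k
    refine ⟨Int.floor_nonneg.2 (by positivity), Int.floor_lt.2 ?_⟩
    push_cast
    exact mul_lt_of_lt_one_left hN' (Int.fract_lt_one _)
  obtain ⟨a, ha, b, hb, hab, heq⟩ := Finset.exists_ne_map_eq_of_card_lt_of_maps_to hts hbox
  refine ⟨a - b, sub_ne_zero.2 hab, fun i => ?_, fun k => ⌊f a k⌋ - ⌊f b k⌋, fun k => ?_⟩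
  · simp only [s, Fintype.mem_piFinset, Finset.mem_Icc] at ha hb
    obtain ⟨ha0, haN⟩ := ha i
    obtain ⟨hb0, hbN⟩ := hb i
    simp only [Pi.sub_apply, abs_le]
    constructor <;> linarith
  · have hfract : f (a - b) k - ((⌊f a k⌋ - ⌊f b k⌋ : ℤ) : ℝ) =
        Int.fract (f a k) - Int.fract (f b k) := by
      rw [map_sub, Pi.sub_apply, Int.fract, Int.fract]
      push_cast
      ring
    have hfloor := Int.abs_sub_lt_one_of_floor_eq_floor (congrFun heq k)
    rwa [← sub_mul, abs_mul, abs_of_pos hN', ← lt_div_iff₀ hN', ← hfract] at hfloor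

theorem EuclideanSpace.norm_le_sqrt_card_mul {ι : Type*} [Fintype ι] {v : EuclideanSpace ℝ ι}
    {t : ℝ} (ht : 0 ≤ t) (h : ∀ i, |v i| ≤ t) : ‖v‖ ≤ √(Fintype.card ι) * t :=
  calc ‖v‖ = √(∑ i, ‖v i‖ ^ 2) := EuclideanSpace.norm_eq v
    _ ≤ √(∑ _i : ι, t ^ 2) := by gcongr with i; exact h i
    _ = √(Fintype.card ι) * t := by simp [Real.sqrt_mul, Real.sqrt_sq ht]

local notation "coords" => (Quaternion.linearIsometryEquivTuple.toLinearEquiv.trans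
  (WithLp.linearEquiv 2 ℝ (Fin 4 → ℝ)) : ℍ ≃ₗ[ℝ] (Fin 4 → ℝ))

-- `(coords).symm` is definitionally `(Quaternion.equivTuple ℝ).symm`.
instance : (volume : Measure ℍ).IsAddHaarMeasure :=
  Measure.MapLinearEquiv.isAddHaarMeasure volume (coords).symm

theorem norm_le_two_mul_of_forall_abs_coords_le {x : ℍ} {t : ℝ} (ht : 0 ≤ t)
    (h : ∀ i, |coords x i| ≤ t) : ‖x‖ ≤ 2 * t := by
  calc ‖x‖ = ‖linearIsometryEquivTuple x‖ := (LinearIsometryEquiv.norm_map _ _).symm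
    _ ≤ √(Fintype.card (Fin 4)) * t := EuclideanSpace.norm_le_sqrt_card_mul ht h
    _ = 2 * t := by norm_num

noncomputable def intQuat : (Fin 4 → ℤ) →+ ℍ :=
  (coords).symm.toAddMonoidHom.comp (AddMonoidHom.compLeft (Int.castAddHom ℝ) (Fin 4))

theorem coords_intQuat (v : Fin 4 → ℤ) : coords (intQuat v) = fun i => (v i : ℝ) :=
  (coords).apply_symm_apply _

theorem isHurwitz_intQuat (v : Fin 4 → ℤ) : IsHurwitz (intQuat v) :=
  Or.inl ⟨v 0, v 1, v 2, v 3, rfl, rfl, rfl, rfl⟩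

theorem intQuat_injective : Function.Injective intQuat :=
  (coords).symm.injective.comp fun _ _ h => funext fun i => Int.cast_injective (congrFun h i)

theorem exists_isHurwitz_norm_mul_sub_le (β : ℍ) {N : ℕ} (hN : 0 < N) :
    ∃ p q : ℍ, IsHurwitz p ∧ IsHurwitz q ∧ q ≠ 0 ∧ ‖q‖ ≤ 2 * N ∧ ‖β * q - p‖ ≤ 2 / N := by
  obtain ⟨q, hq0, hqN, p, hp⟩ := exists_ne_zero_abs_le_abs_sub_lt le_rfl
    ((coords).toAddMonoidHom.comp ((AddMonoidHom.mulLeft β).comp intQuat)) hN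
  refine ⟨intQuat p, intQuat q, isHurwitz_intQuat p, isHurwitz_intQuat q,
    (map_ne_zero_iff _ intQuat_injective).2 hq0, ?_, ?_⟩
  · refine norm_le_two_mul_of_forall_abs_coords_le (by positivity) fun i => ?_
    simp only [coords_intQuat]
    exact_mod_cast hqN i
  · rw [← mul_one_div]
    refine norm_le_two_mul_of_forall_abs_coords_le (by positivity) fun k => ?_
    rw [map_sub, Pi.sub_apply, coords_intQuat]
    exact (hp k).le

def hurwitzApprox (c : ℝ) : Set ℍ :=
  ⋃ (p : ℍ) (q : ℍ) (_ : IsHurwitz p ∧ IsHurwitz q ∧ q ≠ 0), ball (p * q⁻¹) (c / ‖q‖ ^ 2)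

theorem mem_hurwitzApprox {c : ℝ} {β : ℍ} : β ∈ hurwitzApprox c ↔
    ∃ p q : ℍ, IsHurwitz p ∧ IsHurwitz q ∧ q ≠ 0 ∧ ‖β - p * q⁻¹‖ < c / ‖q‖ ^ 2 := by
  simp only [hurwitzApprox, mem_iUnion, mem_ball, dist_eq_norm, exists_prop, and_assoc]

theorem isOpen_hurwitzApprox (c : ℝ) : IsOpen (hurwitzApprox c) :=
  isOpen_iUnion fun _ => isOpen_iUnion fun _ => isOpen_iUnion fun _ => isOpen_ball

theorem badH_subset_iUnion_compl_hurwitzApprox :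
    BadH ⊆ ⋃ n : ℕ, (hurwitzApprox (1 / (n + 1)))ᶜ := by
  rintro β ⟨c, hc, hbad⟩
  obtain ⟨n, hn⟩ := exists_nat_one_div_lt hc
  refine mem_iUnion.2 ⟨n, fun hβ => ?_⟩
  obtain ⟨p, q, hp, hq, hq0, hlt⟩ := mem_hurwitzApprox.1 hβ
  have : 1 / (n + 1) / ‖q‖ ^ 2 < c / ‖q‖ ^ 2 := by gcongr
  exact (hbad p q hp hq hq0).not_gt (hlt.trans this)

theorem exists_isHurwitz_lt_norm_of_notMem_hurwitzApprox {c : ℝ} (hc : 0 < c) {β : ℍ}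
    (hβ : β ∉ hurwitzApprox c) (Q : ℝ) :
    ∃ p q : ℍ, IsHurwitz p ∧ IsHurwitz q ∧ q ≠ 0 ∧ Q < ‖q‖ ∧ ‖β - p * q⁻¹‖ ≤ 4 / ‖q‖ ^ 2 := by
  set N := ⌊2 * Q / c⌋₊ + 1
  have hQN : 2 * Q / c < N := by simpa [N] using Nat.lt_floor_add_one (2 * Q / c)
  obtain ⟨p, q, hp, hq, hq0, hqN, hpq⟩ :=
    exists_isHurwitz_norm_mul_sub_le β (Nat.succ_pos _ : 0 < N)
  have hqpos : 0 < ‖q‖ := norm_pos_iff.2 hq0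
  have herr : ‖β - p * q⁻¹‖ ≤ 2 / (N * ‖q‖) := by
    rw [show β - p * q⁻¹ = (β * q - p) * q⁻¹ by rw [sub_mul, mul_inv_cancel_right₀ hq0],
      norm_mul, norm_inv, ← div_eq_mul_inv, div_le_iff₀ hqpos, div_mul_eq_div_div,
      div_mul_cancel₀ _ hqpos.ne']
    exact hpq
  have hlow : c / ‖q‖ ^ 2 ≤ ‖β - p * q⁻¹‖ :=
    not_lt.1 fun h => hβ (mem_hurwitzApprox.2 ⟨p, q, hp, hq, hq0, h⟩)
  refine ⟨p, q, hp, hq, hq0, ?_, herr.trans ?_⟩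
  · have := hlow.trans herr
    rw [div_le_div_iff₀ (by positivity) (by positivity)] at this
    rw [div_lt_iff₀ hc] at hQN
    nlinarith
  · rw [div_le_div_iff₀ (by positivity) (by positivity)]
    nlinarith

theorem frequently_exists_closedBall_subset_hurwitzApprox {c : ℝ} (hc : 0 < c) {β : ℍ}
    (hβ : β ∉ hurwitzApprox c) :
    ∃ᶠ r in 𝓝[>] 0, ∃ y, closedBall y (c / (c + 8) * r) ⊆ hurwitzApprox c ∩ closedBall β r := by
  rw [(nhdsGT_basis 0).frequently_iff]
  intro δ hδ
  obtain ⟨p, q, hp, hq, hq0, hQq, hpq⟩ :=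
    exists_isHurwitz_lt_norm_of_notMem_hurwitzApprox hc hβ √((c + 8) / (2 * δ))
  have hqpos : 0 < ‖q‖ ^ 2 := pow_pos (norm_pos_iff.2 hq0) 2
  have hrδ : (c + 8) / (2 * ‖q‖ ^ 2) < δ := by
    have := (Real.sqrt_lt' (by positivity)).1 hQq
    rw [div_lt_iff₀ (by positivity)] at this ⊢
    linarith
  have hκr : c / (c + 8) * ((c + 8) / (2 * ‖q‖ ^ 2)) = c / (2 * ‖q‖ ^ 2) := by
    field_simp
  refine ⟨(c + 8) / (2 * ‖q‖ ^ 2), ⟨by positivity, hrδ⟩, p * q⁻¹, fun z hz => ⟨?_, ?_⟩⟩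
  · rw [mem_closedBall, hκr, dist_eq_norm] at hz
    refine mem_hurwitzApprox.2 ⟨p, q, hp, hq, hq0, hz.trans_lt ?_⟩
    gcongr
    linarith
  · rw [mem_closedBall, hκr] at hz
    rw [mem_closedBall]
    calc dist z β ≤ dist z (p * q⁻¹) + dist (p * q⁻¹) β := dist_triangle _ _ _
      _ ≤ c / (2 * ‖q‖ ^ 2) + 4 / ‖q‖ ^ 2 := by
        gcongr
        rwa [dist_comm, dist_eq_norm]
      _ = (c + 8) / (2 * ‖q‖ ^ 2) := by field_simp; ring

theorem volume_compl_hurwitzApprox {c : ℝ} (hc : 0 < c) : volume (hurwitzApprox c)ᶜ = 0 :=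
  measure_eq_zero_of_frequently_closedBall_subset_compl volume
    (isOpen_hurwitzApprox c).measurableSet.compl (κ := c / (c + 8)) (by positivity) fun β hβ => by
      simpa only [compl_compl] using frequently_exists_closedBall_subset_hurwitzApprox hc hβ

/-- The badly approximable quaternions form a Lebesgue-null set. -/
theorem badH_volume_zero : volume BadH = 0 :=
  measure_mono_null badH_subset_iUnion_compl_hurwitzApprox
    (measure_iUnion_null fun _ => volume_compl_hurwitzApprox (by positivity))
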